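/- Let p ≥ 3 be an odd integer. If m is a ρ-invariant monomial of R and u is a variable dividing m, then the polynomial u·m lies in the Hilbert ideal I_H. -/

import Mathlib

open MvPolynomial

noncomputable section

abbrev DVar (r s : ℕ) := (Fin r ⊕ Fin r) ⊕ (Fin s ⊕ Fin s)

def dswap {r s : ℕ} : DVar r s → DVar r s
  | .inl (.inl i) => .inl (.inr i)
  | .inl (.inr i) => .inl (.inl i)
  | .inr (.inl j) => .inr (.inr j)
  | .inr (.inr j) => .inr (.inl j)

def sigmaMap (F : Type*) [Field F] (r s : ℕ) :
    MvPolynomial (DVar r s) F →ₐ[F] MvPolynomial (DVar r s) F :=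
  MvPolynomial.rename dswap

def rhoCoeff {F : Type*} [Field F] {r s : ℕ} (lam : Fin r → F) : DVar r s → F
  | .inl (.inl i) => lam i
  | .inl (.inr i) => (lam i)⁻¹
  | .inr _ => 1

def rhoMap (F : Type*) [Field F] (r s : ℕ) (lam : Fin r → F) :
    MvPolynomial (DVar r s) F →ₐ[F] MvPolynomial (DVar r s) F :=
  MvPolynomial.aeval fun v => MvPolynomial.C (rhoCoeff lam v) * MvPolynomial.X v

def HilbertIdeal (F : Type*) [Field F] (r s : ℕ) (lam : Fin r → F) :
    Ideal (MvPolynomial (DVar r s) F) :=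
  Ideal.span {f | sigmaMap F r s f = f ∧ rhoMap F r s lam f = f ∧ constantCoeff f = 0}

def IsMonomial {σ F : Type*} [CommSemiring F] (f : MvPolynomial σ F) : Prop :=
  ∃ d : σ →₀ ℕ, f = monomial d 1

def GSet (F : Type*) [Field F] (r s p : ℕ) (lam : Fin r → F) :
    Set (MvPolynomial (DVar r s) F) :=
  {f | ∃ m, IsMonomial m ∧ rhoMap F r s lam m = m ∧ sigmaMap F r s m ≠ m ∧
      m.totalDegree ≤ p ∧ f = m + sigmaMap F r s m} ∪
  {f | ∃ (m : MvPolynomial (DVar r s) F) (v : DVar r s), IsMonomial m ∧ rhoMap F r s lam m = m ∧ m.totalDegree ≤ p ∧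
      X v ∣ m ∧ f = X v * m} ∪
  {f | (∃ i : Fin r, f = X (Sum.inl (Sum.inl i)) * X (Sum.inl (Sum.inr i))) ∨
       (∃ j : Fin s, f = X (Sum.inr (Sum.inl j)) * X (Sum.inr (Sum.inr j)))}

def lmExp {σ F : Type*} [CommSemiring F] (mo : MonomialOrder σ) (f : MvPolynomial σ F) :
    σ →₀ ℕ :=
  mo.toSyn.symm (f.support.sup fun d => mo.toSyn d)

/-!
Write `m = u·m'`. Then `u·m = u·(m + σm) - σ(m')·(u·σu)`, and both `m + σm` and `u·σu` are
invariant polynomials without constant term: `σm` is again ρ-invariant because ρ scales `σ(X v)`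
by the inverse of the factor it scales `X v` by, and for the same reason it fixes `u·σu`.
-/

theorem Ideal.mul_mem_of_dvd_of_add_map_mem {R : Type*} [CommRing R] (σ : R →* R)
    {I : Ideal R} {x m : R} (hxm : x ∣ m) (hm : m + σ m ∈ I) (hx : x * σ x ∈ I) :
    x * m ∈ I := by
  obtain ⟨n, rfl⟩ := hxm
  have hdecomp : x * (x * n) = x * (x * n + σ (x * n)) - σ n * (x * σ x) := by
    rw [map_mul]; ring
  rw [hdecomp]
  exact I.sub_mem (I.mul_mem_left x hm) (I.mul_mem_left _ hx)

section DihedralAction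

variable {F : Type*} [Field F] {r s : ℕ}

lemma dswap_dswap (v : DVar r s) : dswap (dswap v) = v := by
  rcases v with (i | i) | (j | j) <;> rfl

lemma dswap_injective : Function.Injective (dswap (r := r) (s := s)) :=
  Function.Involutive.injective dswap_dswap

lemma sigmaMap_X (v : DVar r s) : sigmaMap F r s (X v) = X (dswap v) :=
  rename_X dswap v

lemma sigmaMap_monomial (d : DVar r s →₀ ℕ) (c : F) :
    sigmaMap F r s (monomial d c) = monomial (d.mapDomain dswap) c :=
  rename_monomial dswap d c

lemma sigmaMap_sigmaMap (f : MvPolynomial (DVar r s) F) :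
    sigmaMap F r s (sigmaMap F r s f) = f := by
  rw [sigmaMap, rename_rename, Function.Involutive.comp_self dswap_dswap, rename_id,
    AlgHom.id_apply]

lemma rhoCoeff_dswap (lam : Fin r → F) (v : DVar r s) :
    rhoCoeff lam (dswap v) = (rhoCoeff lam v)⁻¹ := by
  rcases v with (i | i) | (j | j) <;> simp [rhoCoeff, dswap]

lemma rhoMap_X (lam : Fin r → F) (v : DVar r s) :
    rhoMap F r s lam (X v) = C (rhoCoeff lam v) * X v :=
  aeval_X _ v

def rhoWeight (lam : Fin r → F) (d : DVar r s →₀ ℕ) : F :=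
  d.prod fun v k => rhoCoeff lam v ^ k

lemma rhoMap_monomial (lam : Fin r → F) (d : DVar r s →₀ ℕ) (c : F) :
    rhoMap F r s lam (monomial d c) = monomial d (rhoWeight lam d * c) := by
  rw [rhoMap, aeval_monomial, monomial_eq, rhoWeight, C_mul, map_finsuppProd,
    algebraMap_eq]
  simp only [mul_pow, ← C_pow, Finsupp.prod_mul]
  ring

lemma rhoMap_monomial_one_eq_self_iff (lam : Fin r → F) (d : DVar r s →₀ ℕ) :
    rhoMap F r s lam (monomial d 1) = monomial d 1 ↔ rhoWeight lam d = 1 := by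
  rw [rhoMap_monomial, mul_one]
  simp [monomial_eq_monomial_iff]

lemma rhoWeight_mapDomain_dswap (lam : Fin r → F) (d : DVar r s →₀ ℕ) :
    rhoWeight lam (d.mapDomain dswap) = (rhoWeight lam d)⁻¹ := by
  rw [rhoWeight, rhoWeight, Finsupp.prod_mapDomain_index_inj dswap_injective, Finsupp.prod,
    Finsupp.prod, ← Finset.prod_inv_distrib]
  simp only [rhoCoeff_dswap, inv_pow]

lemma rhoCoeff_ne_zero_of_rhoWeight_eq_one {lam : Fin r → F} {d : DVar r s →₀ ℕ}
    (hd : rhoWeight lam d = 1) {v : DVar r s} (hv : d v ≠ 0) : rhoCoeff lam v ≠ 0 := by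
  have hprod : ∏ w ∈ d.support, rhoCoeff lam w ^ d w ≠ 0 := by
    rw [← Finsupp.prod, ← rhoWeight, hd]; exact one_ne_zero
  exact ne_zero_pow hv (Finset.prod_ne_zero_iff.mp hprod v (Finsupp.mem_support_iff.mpr hv))

lemma mem_hilbertIdeal_of_invariant {lam : Fin r → F} {f : MvPolynomial (DVar r s) F}
    (hσ : sigmaMap F r s f = f) (hρ : rhoMap F r s lam f = f) (h0 : constantCoeff f = 0) :
    f ∈ HilbertIdeal F r s lam :=
  Ideal.subset_span ⟨hσ, hρ, h0⟩

lemma monomial_add_sigmaMap_mem_hilbertIdeal {lam : Fin r → F} {d : DVar r s →₀ ℕ}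
    (hd : rhoWeight lam d = 1) (hd0 : d ≠ 0) :
    monomial d 1 + sigmaMap F r s (monomial d 1) ∈ HilbertIdeal F r s lam := by
  refine mem_hilbertIdeal_of_invariant ?_ ?_ ?_
  · rw [map_add, sigmaMap_sigmaMap, add_comm]
  · rw [map_add, sigmaMap_monomial, rhoMap_monomial, rhoMap_monomial,
      rhoWeight_mapDomain_dswap, hd, inv_one, one_mul]
  · rw [map_add, sigmaMap, constantCoeff_rename, constantCoeff_monomial, if_neg hd0, add_zero]

lemma X_mul_sigmaMap_X_mem_hilbertIdeal {lam : Fin r → F} {v : DVar r s}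
    (hv : rhoCoeff lam v ≠ 0) :
    X v * sigmaMap F r s (X v) ∈ HilbertIdeal F r s lam := by
  rw [sigmaMap_X]
  refine mem_hilbertIdeal_of_invariant ?_ ?_ ?_
  · rw [map_mul, sigmaMap_X, sigmaMap_X, dswap_dswap, mul_comm]
  · rw [map_mul, rhoMap_X, rhoMap_X, rhoCoeff_dswap, mul_mul_mul_comm, ← C_mul,
      mul_inv_cancel₀ hv, C_1, one_mul]
  · simp

end DihedralAction

theorem var_mul_rho_invariant_monomial_mem_hilbertIdeal_general
    {F : Type*} [Field F] {r s : ℕ}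
    (lam : Fin r → F)
    (m : MvPolynomial (DVar r s) F) (hm : IsMonomial m) (hρ : rhoMap F r s lam m = m)
    (u : DVar r s) (hu : X u ∣ m) :
    X u * m ∈ HilbertIdeal F r s lam := by
  obtain ⟨d, rfl⟩ := hm
  have hd : rhoWeight lam d = 1 := (rhoMap_monomial_one_eq_self_iff lam d).mp hρ
  have hdu : d u ≠ 0 := (X_dvd_monomial.mp hu).resolve_left one_ne_zero
  have hd0 : d ≠ 0 := ne_of_apply_ne (· u) hdu
  exact Ideal.mul_mem_of_dvd_of_add_map_mem (sigmaMap F r s).toMonoidHom hu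
    (monomial_add_sigmaMap_mem_hilbertIdeal hd hd0)
    (X_mul_sigmaMap_X_mem_hilbertIdeal (rhoCoeff_ne_zero_of_rhoWeight_eq_one hd hdu))

/-- For `p ≥ 3` an odd integer, if `m` is a `ρ`-invariant monomial and `u` is a
variable dividing `m`, then `u·m` lies in the Hilbert ideal `I_H`. -/
theorem var_mul_rho_invariant_monomial_mem_hilbertIdeal
    {F : Type*} [Field F] [CharP F 2] {r s p : ℕ} (hp : 3 ≤ p) (hodd : Odd p)
    (ζ : F) (hζ : IsPrimitiveRoot ζ p)
    (lam : Fin r → F) (hlam : ∀ i, lam i ^ p = 1 ∧ lam i ≠ 1)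
    (m : MvPolynomial (DVar r s) F) (hm : IsMonomial m) (hρ : rhoMap F r s lam m = m)
    (u : DVar r s) (hu : X u ∣ m) :
    X u * m ∈ HilbertIdeal F r s lam :=
  var_mul_rho_invariant_monomial_mem_hilbertIdeal_general lam m hm hρ u hu
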